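/- Let H be a complex Hilbert space, μ a finite Borel measure on 𝕋, and X, Y unitary operators on H. If X preserves μ and Y preserves μ, then the product XY preserves μ. -/

import Mathlib

open MeasureTheory InnerProductSpace

noncomputable section

instance : MeasurableSpace Circle := borel Circle
instance : BorelSpace Circle := ⟨rfl⟩

/-- arc-length (Haar/Lebesgue) measure on the circle -/
def ell : Measure Circle := Measure.map Circle.exp (volume.restrict (Set.Ioc 0 (2 * Real.pi)))

variable {K : Type*} [NormedAddCommGroup K] [InnerProductSpace ℂ K]

/-- `ν` is the spectral measure of the pair `(U, ψ)`. -/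
def IsSpectralMeasure (U : K ≃ₗᵢ[ℂ] K) (ψ : K) (ν : Measure Circle) : Prop :=
  IsFiniteMeasure ν ∧ ∀ n : ℤ, (inner ℂ ψ ((U ^ n) ψ) : ℂ) = ∫ z, (z : ℂ) ^ n ∂ν

open Classical in
/-- the spectral measure of the pair `(U, ψ)` -/
def specMeasure (U : K ≃ₗᵢ[ℂ] K) (ψ : K) : Measure Circle :=
  if h : ∃ ν, IsSpectralMeasure U ψ ν then h.choose else 0

/-- the set `H_μ(U)` -/
def specSet (μ : Measure Circle) (U : K ≃ₗᵢ[ℂ] K) : Set K :=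
  {ψ | specMeasure U ψ ≪ μ}

open Classical in
/-- the subspace `H_μ(U)` -/
def specSub (μ : Measure Circle) (U : K ≃ₗᵢ[ℂ] K) : Submodule ℂ K :=
  if h : ∃ S : Submodule ℂ K, (S : Set K) = specSet μ U then h.choose else ⊥

open Classical in
/-- the restriction `[U]_μ` of `U` to `H_μ(U)` -/
def restr (μ : Measure Circle) (U : K ≃ₗᵢ[ℂ] K) :
    (specSub μ U) ≃ₗᵢ[ℂ] (specSub μ U) :=
  if h : ∃ V : (specSub μ U) ≃ₗᵢ[ℂ] (specSub μ U), ∀ ψ : specSub μ U, (V ψ : K) = U ψ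
  then h.choose else LinearIsometryEquiv.refl ℂ _

/-- unitary equivalence of unitary operators on (possibly different) Hilbert spaces -/
def UnitarilyEquiv {K₁ K₂ : Type*} [NormedAddCommGroup K₁] [InnerProductSpace ℂ K₁]
    [NormedAddCommGroup K₂] [InnerProductSpace ℂ K₂]
    (A : K₁ ≃ₗᵢ[ℂ] K₁) (B : K₂ ≃ₗᵢ[ℂ] K₂) : Prop :=
  ∃ V : K₁ ≃ₗᵢ[ℂ] K₂, ∀ x, V (A x) = B (V x)

/-- `X` preserves `μ` : for every unitary `U`, `[UX]_μ ≅ [U]_μ`. -/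
def Preserves (μ : Measure Circle) (X : K ≃ₗᵢ[ℂ] K) : Prop :=
  ∀ U : K ≃ₗᵢ[ℂ] K, UnitarilyEquiv (restr μ (X.trans U)) (restr μ U)

theorem UnitarilyEquiv.trans {K₁ K₂ K₃ : Type*} [NormedAddCommGroup K₁] [InnerProductSpace ℂ K₁]
    [NormedAddCommGroup K₂] [InnerProductSpace ℂ K₂] [NormedAddCommGroup K₃] [InnerProductSpace ℂ K₃]
    {A : K₁ ≃ₗᵢ[ℂ] K₁} {B : K₂ ≃ₗᵢ[ℂ] K₂} {C : K₃ ≃ₗᵢ[ℂ] K₃}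
    (hAB : UnitarilyEquiv A B) (hBC : UnitarilyEquiv B C) : UnitarilyEquiv A C := by
  obtain ⟨V, hV⟩ := hAB
  obtain ⟨W, hW⟩ := hBC
  exact ⟨V.trans W, fun x => by simp [hV, hW]⟩

theorem preserves_mul_general {H : Type*} [NormedAddCommGroup H]
    [InnerProductSpace ℂ H]
    (μ : Measure Circle)
    (X Y : H ≃ₗᵢ[ℂ] H) (hX : Preserves μ X) (hY : Preserves μ Y) :
    Preserves μ (Y.trans X) :=
  -- `U(XY) = (UX)Y` holds definitionally, so `[U(XY)]_μ ≅ [UX]_μ ≅ [U]_μ`.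
  fun U => (hY (X.trans U)).trans (hX U)

/-- If `X` and `Y` both preserve `μ`, then the product `XY` preserves `μ`. -/
theorem preserves_mul {H : Type*} [NormedAddCommGroup H]
    [InnerProductSpace ℂ H] [CompleteSpace H]
    (μ : Measure Circle) [IsFiniteMeasure μ]
    (X Y : H ≃ₗᵢ[ℂ] H) (hX : Preserves μ X) (hY : Preserves μ Y) :
    Preserves μ (Y.trans X) :=
  preserves_mul_general μ X Y hX hY

end
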